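/- Let A ⊆ ℝ³ be a nonempty compact semi-algebraic set whose boundary ∂A is connected and nonempty, and let f : A → ℝ be a regular function (continuous and, in each coordinate, strictly monotone or constant). Then the image f(∂A) equals the closed interval [min_A f, max_A f]. -/

import Mathlib

/-!
Move from a point of `A` along the first coordinate axis. The slice of `A` on that line is
compact and `f` is monotone or antitone on it, so `f` does not decrease on the way to the top
or the bottom endpoint of the slice, and both endpoints lie on `∂A`. Hence the extreme values
of `f` on `A` are attained on `∂A`, and as `∂A` is connected, `f '' ∂A` is the interval
between them.
-/

open Set Function

def IsSemialgebraic {n : ℕ} (A : Set (Fin n → ℝ)) : Prop :=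
  ∃ (N : ℕ) (E I : Fin N → Finset (MvPolynomial (Fin n) ℝ)),
    A = ⋃ m, {x | (∀ p ∈ E m, MvPolynomial.eval x p = 0) ∧
                  (∀ p ∈ I m, 0 < MvPolynomial.eval x p)}

/-- A function is regular on `A` if it is continuous on `A` and, in each
coordinate (with the other coordinates fixed), strictly increasing, strictly
decreasing, or constant. -/
def RegularOn {n : ℕ} (f : (Fin n → ℝ) → ℝ) (A : Set (Fin n → ℝ)) : Prop :=
  ContinuousOn f A ∧
  ∀ i : Fin n,
    (∀ x ∈ A, ∀ y ∈ A, (∀ j, j ≠ i → x j = y j) → x i < y i → f x < f y) ∨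
    (∀ x ∈ A, ∀ y ∈ A, (∀ j, j ≠ i → x j = y j) → x i < y i → f y < f x) ∨
    (∀ x ∈ A, ∀ y ∈ A, (∀ j, j ≠ i → x j = y j) → f x = f y)

section Slice

variable {ι : Type*} [DecidableEq ι] {A : Set (ι → ℝ)} (x : ι → ℝ) (i : ι)

lemma update_mem_frontier {T : Set ℝ} {t₀ : ℝ} (hA : update x i t₀ ∈ A)
    (hT : t₀ ∈ closure T) (hout : ∀ t ∈ T, update x i t ∉ A) :
    update x i t₀ ∈ frontier A := by
  rw [frontier_eq_closure_inter_closure]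
  refine ⟨subset_closure hA, ?_⟩
  have hcont : Continuous (update x i) := continuous_const.update i continuous_id
  exact map_mem_closure hcont hT hout

lemma isCompact_update_preimage (hA : IsCompact A) : IsCompact {t | update x i t ∈ A} := by
  have hcont : Continuous (update x i) := continuous_const.update i continuous_id
  exact (hA.image (continuous_apply i)).of_isClosed_subset
    (hA.isClosed.preimage hcont) fun t ht => ⟨update x i t, ht, update_self i t x⟩

end Slice

namespace RegularOn

variable {n : ℕ} {f : (Fin n → ℝ) → ℝ} {A : Set (Fin n → ℝ)}

lemma neg (hf : RegularOn f A) : RegularOn (fun x => -f x) A := by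
  refine ⟨hf.1.neg, fun i => ?_⟩
  rcases hf.2 i with h | h | h
  · exact Or.inr (Or.inl fun x hx y hy hj hi => neg_lt_neg (h x hx y hy hj hi))
  · exact Or.inl fun x hx y hy hj hi => neg_lt_neg (h x hx y hy hj hi)
  · exact Or.inr (Or.inr fun x hx y hy hj => congrArg Neg.neg (h x hx y hy hj))

lemma monotoneOn_or_antitoneOn_update (hf : RegularOn f A) (x : Fin n → ℝ) (i : Fin n) :
    MonotoneOn (fun t => f (update x i t)) {t | update x i t ∈ A} ∨
      AntitoneOn (fun t => f (update x i t)) {t | update x i t ∈ A} := by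
  have hline (s t : ℝ) : ∀ j, j ≠ i → update x i s j = update x i t j := fun j hj => by
    rw [update_of_ne hj, update_of_ne hj]
  rcases hf.2 i with h | h | h
  · refine Or.inl fun s hs t ht hst => ?_
    rcases hst.eq_or_lt with rfl | hlt
    · rfl
    · exact (h _ hs _ ht (hline s t) (by simpa using hlt)).le
  · refine Or.inr fun s hs t ht hst => ?_
    rcases hst.eq_or_lt with rfl | hlt
    · rfl
    · exact (h _ hs _ ht (hline s t) (by simpa using hlt)).le
  · exact Or.inl fun s hs t ht _ => (h _ hs _ ht (hline s t)).le

lemma exists_mem_frontier_le [NeZero n] (hf : RegularOn f A) (hA : IsCompact A) {x : Fin n → ℝ}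
    (hx : x ∈ A) : ∃ p ∈ frontier A, f x ≤ f p := by
  set S := {t | update x 0 t ∈ A}
  have hS : IsCompact S := isCompact_update_preimage x 0 hA
  have hxS : x 0 ∈ S := by simpa [S] using hx
  rcases hf.monotoneOn_or_antitoneOn_update x 0 with hmono | hanti
  · have hsup : sSup S ∈ S := hS.sSup_mem ⟨_, hxS⟩
    refine ⟨_, update_mem_frontier x 0 (T := Ioi (sSup S)) hsup (by simp [closure_Ioi])
      fun t ht hmem => (le_csSup hS.bddAbove hmem).not_gt ht, ?_⟩
    simpa using hmono hxS hsup (le_csSup hS.bddAbove hxS)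
  · have hinf : sInf S ∈ S := hS.sInf_mem ⟨_, hxS⟩
    refine ⟨_, update_mem_frontier x 0 (T := Iio (sInf S)) hinf (by simp [closure_Iio])
      fun t ht hmem => (csInf_le hS.bddBelow hmem).not_gt ht, ?_⟩
    simpa using hanti hinf hxS (csInf_le hS.bddBelow hxS)

lemma exists_mem_frontier_ge [NeZero n] (hf : RegularOn f A) (hA : IsCompact A) {x : Fin n → ℝ}
    (hx : x ∈ A) : ∃ p ∈ frontier A, f p ≤ f x := by
  obtain ⟨p, hp, hle⟩ := hf.neg.exists_mem_frontier_le hA hx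
  exact ⟨p, hp, neg_le_neg_iff.1 hle⟩

lemma sSup_image_mem_image_frontier [NeZero n] (hf : RegularOn f A) (hA : IsCompact A)
    (hne : A.Nonempty) : sSup (f '' A) ∈ f '' frontier A := by
  have hK := hA.image_of_continuousOn hf.1
  obtain ⟨x, hx, hfx⟩ := hK.sSup_mem (hne.image f)
  obtain ⟨p, hp, hle⟩ := hf.exists_mem_frontier_le hA hx
  exact ⟨p, hp, le_antisymm (le_csSup hK.bddAbove ⟨p, hA.isClosed.frontier_subset hp, rfl⟩)
    (hfx ▸ hle)⟩

lemma sInf_image_mem_image_frontier [NeZero n] (hf : RegularOn f A) (hA : IsCompact A)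
    (hne : A.Nonempty) : sInf (f '' A) ∈ f '' frontier A := by
  have hK := hA.image_of_continuousOn hf.1
  obtain ⟨x, hx, hfx⟩ := hK.sInf_mem (hne.image f)
  obtain ⟨p, hp, hle⟩ := hf.exists_mem_frontier_ge hA hx
  exact ⟨p, hp, le_antisymm (hfx ▸ hle)
    (csInf_le hK.bddBelow ⟨p, hA.isClosed.frontier_subset hp, rfl⟩)⟩

end RegularOn

theorem stmt3_general (A : Set (Fin 3 → ℝ)) (f : (Fin 3 → ℝ) → ℝ)
    (hne : A.Nonempty) (hcpt : IsCompact A)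
    (hbd : IsConnected (frontier A)) (hf : RegularOn f A) :
    f '' frontier A = Set.Icc (sInf (f '' A)) (sSup (f '' A)) := by
  have hfr : frontier A ⊆ A := hcpt.isClosed.frontier_subset
  have hK := hcpt.image_of_continuousOn hf.1
  refine Subset.antisymm (fun y hy => ?_) ?_
  · have hyA : y ∈ f '' A := image_mono hfr hy
    exact ⟨csInf_le hK.bddBelow hyA, le_csSup hK.bddAbove hyA⟩
  · exact (hbd.isPreconnected.image f (hf.1.mono hfr)).Icc_subset
      (hf.sInf_image_mem_image_frontier hcpt hne) (hf.sSup_image_mem_image_frontier hcpt hne)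

theorem stmt3 (A : Set (Fin 3 → ℝ)) (f : (Fin 3 → ℝ) → ℝ)
    (hne : A.Nonempty) (hcpt : IsCompact A) (hsa : IsSemialgebraic A)
    (hbd : IsConnected (frontier A)) (hf : RegularOn f A) :
    f '' frontier A = Set.Icc (sInf (f '' A)) (sSup (f '' A)) :=
  stmt3_general A f hne hcpt hbd hf
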